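/- Let G be a finite connected simple graph with an injective edge-weight function w, and let T be the (unique) minimum-weight spanning tree of G. Then for every edge e = uv of G, e is not an edge of T if and only if there exists a path in G between u and v all of whose edges have weight strictly less than w(e). -/

import Mathlib

/-!
Everything rests on the exchange argument: if `xy` is an edge of `T` and `ab` an edge of `G`
whose endpoints lie on different sides of `T - xy`, then `T - xy + ab` is again a spanning tree,
so minimality of `T` forces `w(xy) ≤ w(ab)`. If `uv ∉ T`, every edge of the `T`-path from `u`
to `v` separates `u` from `v` in `T`, hence is lighter than `uv` (strictly, by injectivity).
If `uv ∈ T`, a path of edges lighter than `uv` would have to cross the cut of `T - uv` at some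
edge `ab`, and then `w(uv) ≤ w(ab) < w(uv)`.
-/

open SimpleGraph Finset

variable {V : Type*}

/-- `T` is a spanning tree of `G`: a subgraph on the same vertex set that is a tree. -/
def IsSpanningTree (G T : SimpleGraph V) : Prop :=
  T ≤ G ∧ T.IsTree

/-- The total weight of the edges of a graph. -/
noncomputable def totalWeight [Fintype V] (T : SimpleGraph V) (w : Sym2 V → ℝ) : ℝ :=
  ∑ e ∈ T.edgeSet.toFinite.toFinset, w e

/-- `T` is a minimum-weight spanning tree of `G` with respect to `w`. -/
def IsMinSpanningTree [Fintype V] (G T : SimpleGraph V) (w : Sym2 V → ℝ) : Prop :=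
  IsSpanningTree G T ∧
    ∀ T' : SimpleGraph V, IsSpanningTree G T' → totalWeight T w ≤ totalWeight T' w

namespace SimpleGraph

variable {G T : SimpleGraph V}

theorem Reachable.reachable_deleteEdges_or {z x : V} (h : G.Reachable z x) (y : V) :
    (G.deleteEdges {s(x, y)}).Reachable z x ∨ (G.deleteEdges {s(x, y)}).Reachable z y := by
  classical
  obtain ⟨P, hP⟩ := h.exists_isPath
  by_cases heP : s(x, y) ∈ P.edges
  · have hyP := P.snd_mem_support_of_mem_edges heP
    have hxP₁ := Walk.endpoint_notMem_support_takeUntil hP hyP (P.adj_of_mem_edges heP).ne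
    refine .inr <| reachable_deleteEdges_iff_exists_walk.mpr ⟨P.takeUntil y hyP, fun h ↦ ?_⟩
    exact hxP₁ <| (P.takeUntil y hyP).fst_mem_support_of_mem_edges h
  · exact .inl <| reachable_deleteEdges_iff_exists_walk.mpr ⟨P, heP⟩

theorem IsAcyclic.not_reachable_deleteEdges_of_mem_edges (hT : T.IsAcyclic) {u v : V}
    {P : T.Walk u v} (hP : P.IsPath) {e : Sym2 V} (he : e ∈ P.edges) :
    ¬(T.deleteEdges {e}).Reachable u v := by
  intro h
  obtain ⟨Q, hQ⟩ := h.exists_isPath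
  have hQP : Q.mapLe (deleteEdges_le _) = P :=
    congrArg Subtype.val ((hT.subsingleton_path u v).elim ⟨_, hQ.mapLe _⟩ ⟨P, hP⟩)
  rw [← hQP, Walk.edges_mapLe_eq_edges] at he
  simpa using Q.edges_subset_edgeSet he

theorem IsTree.deleteEdges_sup_edge (hT : T.IsTree) (x y : V) {a b : V}
    (hab : ¬(T.deleteEdges {s(x, y)}).Reachable a b) :
    (T.deleteEdges {s(x, y)} ⊔ edge a b).IsTree := by
  set T' := T.deleteEdges {s(x, y)}
  have hle : T' ≤ T' ⊔ edge a b := le_sup_left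
  have hab' : (T' ⊔ edge a b).Adj a b :=
    Or.inr ((edge_adj ..).mpr ⟨Or.inl ⟨rfl, rfl⟩, fun h ↦ hab (h ▸ .rfl)⟩)
  have hside (z : V) := (hT.connected.preconnected z x).reachable_deleteEdges_or y
  have hxy : (T' ⊔ edge a b).Reachable x y := by
    rcases hside a with ha | ha <;> rcases hside b with hb | hb
    · exact absurd (ha.trans hb.symm) hab
    · exact ((ha.symm.mono hle).trans hab'.reachable).trans (hb.mono hle)
    · exact ((hb.symm.mono hle).trans hab'.symm.reachable).trans (ha.mono hle)
    · exact absurd (ha.trans hb.symm) hab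
  refine ⟨(connected_iff_exists_forall_reachable _).mpr ⟨x, fun z ↦ ?_⟩, ?_⟩
  · rcases hside z with h | h
    · exact (h.mono hle).symm
    · exact hxy.trans (h.mono hle).symm
  · exact (hT.isAcyclic.anti (deleteEdges_le _)).sup_edge_of_not_reachable hab

theorem totalWeight_deleteEdges_sup_edge [Fintype V] (w : Sym2 V → ℝ) {x y a b : V}
    (hxy : T.Adj x y) (hab : s(a, b) ∉ T.edgeSet) (hne : a ≠ b) :
    totalWeight (T.deleteEdges {s(x, y)} ⊔ edge a b) w + w s(x, y) =
      totalWeight T w + w s(a, b) := by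
  classical
  have hedges : (T.deleteEdges {s(x, y)} ⊔ edge a b).edgeSet.toFinite.toFinset =
      insert s(a, b) (T.edgeSet.toFinite.toFinset.erase s(x, y)) := by
    ext e
    simp only [Set.Finite.mem_toFinset, edgeSet_sup, edgeSet_edge_of_ne hne, edgeSet_deleteEdges,
      Finset.mem_insert, Finset.mem_erase, Set.mem_union, Set.mem_sdiff, Set.mem_singleton_iff]
    tauto
  have habE : s(a, b) ∉ T.edgeSet.toFinite.toFinset.erase s(x, y) := fun h ↦
    hab ((Set.Finite.mem_toFinset _).mp (Finset.mem_of_mem_erase h))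
  rw [totalWeight, totalWeight, hedges, sum_insert habE]
  linarith [sum_erase_add _ w (T.edgeSet.toFinite.mem_toFinset.mpr (T.mem_edgeSet.mpr hxy))]

end SimpleGraph

theorem IsMinSpanningTree.weight_le_of_not_reachable [Fintype V] {G T : SimpleGraph V}
    {w : Sym2 V → ℝ} (hT : IsMinSpanningTree G T w) {x y a b : V} (hxy : T.Adj x y)
    (hab : G.Adj a b) (hnr : ¬(T.deleteEdges {s(x, y)}).Reachable a b) :
    w s(x, y) ≤ w s(a, b) := by
  by_cases habT : s(a, b) ∈ T.edgeSet
  · suffices s(a, b) = s(x, y) by rw [this]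
    by_contra hne
    exact hnr ((deleteEdges_adj ..).mpr ⟨habT, hne⟩).reachable
  · obtain ⟨⟨hTG, hTtree⟩, hTmin⟩ := hT
    have hT₂ : IsSpanningTree G (T.deleteEdges {s(x, y)} ⊔ edge a b) :=
      ⟨sup_le ((deleteEdges_le _).trans hTG) ((edge_le_iff G).mpr (.inr hab)),
        hTtree.deleteEdges_sup_edge x y hnr⟩
    linarith [hTmin _ hT₂, totalWeight_deleteEdges_sup_edge w hxy habT hab.ne]

theorem stmt_4_general [Fintype V] (G : SimpleGraph V)
    (w : Sym2 V → ℝ) (hw : Set.InjOn w G.edgeSet)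
    (T : SimpleGraph V) (hT : IsMinSpanningTree G T w)
    (u v : V) (huv : G.Adj u v) :
    s(u, v) ∉ T.edgeSet ↔
      ∃ p : G.Walk u v, p.IsPath ∧ ∀ e' ∈ p.edges, w e' < w s(u, v) := by
  obtain ⟨hTG, hTtree⟩ := hT.1
  constructor
  · intro huvT
    obtain ⟨P, hP, -⟩ := hTtree.existsUnique_path u v
    refine ⟨P.mapLe hTG, hP.mapLe hTG, fun e he ↦ ?_⟩
    rw [Walk.edges_mapLe_eq_edges] at he
    induction e using Sym2.ind with | h x y => ?_
    have hxy : T.Adj x y := P.adj_of_mem_edges he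
    refine (hT.weight_le_of_not_reachable hxy huv
      (hTtree.isAcyclic.not_reachable_deleteEdges_of_mem_edges hP he)).lt_of_ne fun heq ↦ huvT ?_
    rw [← hw (hTG hxy) huv heq]
    exact hxy
  · rintro ⟨p, -, hp⟩ huvT
    have hbridge : ¬(T.deleteEdges {s(u, v)}).Reachable u v :=
      isAcyclic_iff_forall_adj_isBridge.mp hTtree.isAcyclic huvT
    obtain ⟨d, hd, hdu, hdv⟩ :=
      p.exists_boundary_dart {z | (T.deleteEdges {s(u, v)}).Reachable u z} .rfl hbridge
    have hle := hT.weight_le_of_not_reachable huvT d.adj fun h ↦ hdv (hdu.trans h)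
    exact (hle.trans_lt (hp _ (p.edges_eq_map_darts ▸ List.mem_map_of_mem hd))).false

/-- For the minimum spanning tree `T` of a finite connected graph `G` with injective
edge weights, an edge `e = uv` of `G` is not in `T` iff there is a path in `G` between
`u` and `v` all of whose edges have weight strictly less than `w e`. -/
theorem stmt_4 [Fintype V] (G : SimpleGraph V) (hG : G.Connected)
    (w : Sym2 V → ℝ) (hw : Set.InjOn w G.edgeSet)
    (T : SimpleGraph V) (hT : IsMinSpanningTree G T w)
    (u v : V) (huv : G.Adj u v) :
    s(u, v) ∉ T.edgeSet ↔
      ∃ p : G.Walk u v, p.IsPath ∧ ∀ e' ∈ p.edges, w e' < w s(u, v) :=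
  stmt_4_general G w hw T hT u v huv
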